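/- arXiv:0710.2311 — 2 statements merged into one kernel-verified Lean document; each statement's English description precedes it below -/
import Mathlib

section
/- There is no nonabelian group of order p⁵ (for p = 2 or p = 3) whose center is cyclic of order p and which contains an elementary abelian subgroup of order p⁴. -/
/-!
Conjugation by an element `a ∉ V` acts on the elementary abelian group `V`, written additively,
as an endomorphism `σ` with `σ ^ p = 1`, so in characteristic `p` we get `(σ - 1) ^ p = 0`.
An element of `ker (σ - 1)` commutes with `a` and with `V`, hence with all of `G` since `V` is
maximal, so `ker (σ - 1)` has at most `|Z(G)| = p` elements. Kernel sizes are submultiplicative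
under composition, hence `|V| ≤ p ^ p`, which contradicts `|V| = p ^ 4` when `p ≤ 3`.
-/

open scoped IsMulCommutative

theorem AddMonoidHom.card_ker_comp_le {A B C : Type*} [AddGroup A] [AddGroup B] [AddGroup C]
    [Finite B] (f : B →+ C) (g : A →+ B) :
    Nat.card (f.comp g).ker ≤ Nat.card f.ker * Nat.card g.ker := by
  have hle : g.ker ≤ (f.comp g).ker := fun x hx => by simp [g.mem_ker.1 hx]
  rw [← AddSubgroup.relIndex_bot_left (f.comp g).ker,
    ← AddSubgroup.relIndex_mul_relIndex _ _ _ bot_le hle, AddSubgroup.relIndex_bot_left,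
    AddSubgroup.relIndex_ker, mul_comm]
  gcongr
  exact AddSubgroup.card_le_of_le <| by
    rw [← AddMonoidHom.comap_ker]; exact AddSubgroup.map_comap_le ..

theorem AddMonoid.End.card_ker_pow_le {A : Type*} [AddGroup A] [Finite A] (f : AddMonoid.End A)
    (n : ℕ) : Nat.card (f ^ n).ker ≤ Nat.card f.ker ^ n := by
  induction n with
  | zero => exact (AddSubgroup.card_bot).le
  | succ n ih =>
    calc Nat.card (f ^ (n + 1)).ker = Nat.card ((f ^ n).comp f).ker := rfl
      _ ≤ Nat.card (f ^ n).ker * Nat.card f.ker := AddMonoidHom.card_ker_comp_le _ _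
      _ ≤ Nat.card f.ker ^ (n + 1) := by rw [pow_succ]; gcongr

theorem AddMonoid.End.card_le_card_ker_pow_of_pow_eq_zero {A : Type*} [AddCommGroup A] [Finite A]
    {f : AddMonoid.End A} {n : ℕ} (hf : f ^ n = 0) : Nat.card A ≤ Nat.card f.ker ^ n := by
  have hker : (f ^ n).ker = ⊤ :=
    (AddSubgroup.eq_top_iff' _).mpr fun x => show (f ^ n) x = 0 by rw [hf]; rfl
  calc Nat.card A = Nat.card (f ^ n).ker := by rw [hker, AddSubgroup.card_top]
    _ ≤ Nat.card f.ker ^ n := card_ker_pow_le f n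

theorem AddMonoid.End.sub_one_pow_eq_zero {A : Type*} [AddCommGroup A] {p : ℕ} (hp : p.Prime)
    (hA : ∀ x : A, p • x = 0) {σ : AddMonoid.End A} (hσ : σ ^ p = 1) : (σ - 1) ^ p = 0 := by
  rcases subsingleton_or_nontrivial A with _ | _
  · ext x; exact Subsingleton.elim _ _
  obtain ⟨x, hx⟩ := exists_ne (0 : A)
  have : Nontrivial (AddMonoid.End A) :=
    nontrivial_of_ne 0 1 fun h => hx (DFunLike.congr_fun h x).symm
  have : Fact p.Prime := ⟨hp⟩
  have : CharP (AddMonoid.End A) p :=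
    (CharP.charP_iff_prime_eq_zero hp).2 (by ext y; simp [hA])
  rw [sub_pow_char_of_commute (p := p) (Commute.one_right σ), hσ, one_pow, sub_self]

namespace Subgroup

variable {G : Type*} [Group G] (V : Subgroup G)

theorem mem_center_of_commute_of_index_prime [IsMulCommutative V] (hV : V.index.Prime)
    {a x : G} (ha : a ∉ V) (hx : x ∈ V) (hax : Commute a x) : x ∈ center G := by
  let K := centralizer {x}
  have hVK : V ≤ K := fun y hy => by
    simpa [K, mem_centralizer_singleton_iff] using setLike_mul_comm hy hx
  have haK : a ∈ K := by simpa [K, mem_centralizer_singleton_iff] using hax.eq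
  rcases hV.eq_one_or_self_of_dvd _ (index_dvd_of_le hVK) with hK | hK
  · exact centralizer_eq_top_iff_subset.mp (index_eq_one.mp hK) rfl
  · have : V.relIndex K = 1 :=
      (Nat.mul_eq_right hV.ne_zero).mp (hK ▸ relIndex_mul_index hVK)
    exact absurd (relIndex_eq_one.mp this haK) ha

variable [V.Normal] [IsMulCommutative V]

/-- Written additively so that `σ - 1` makes sense in the ring `AddMonoid.End`. -/
def conjEnd : G →* AddMonoid.End (Additive V) where
  toFun g := (MulAut.conjNormal g).toMonoidHom.toAdditive
  map_one' := by ext; simp only [map_one]; rfl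
  map_mul' g h := by ext; simp only [map_mul]; rfl

theorem coe_conjEnd_apply (g : G) (x : Additive V) :
    ((V.conjEnd g x).toMul : G) = g * x.toMul * g⁻¹ :=
  MulAut.conjNormal_apply g x.toMul

theorem conjEnd_eq_one_of_mem {v : G} (hv : v ∈ V) : V.conjEnd v = 1 := by
  ext x
  simp [coe_conjEnd_apply, setLike_mul_comm hv x.toMul.2]

theorem card_ker_conjEnd_sub_one_le [Finite G] (hV : V.index.Prime) {a : G} (ha : a ∉ V) :
    Nat.card (V.conjEnd a - 1).ker ≤ Nat.card (center G) := by
  refine Nat.card_le_card_of_injective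
    (fun x => ⟨x.1.toMul, V.mem_center_of_commute_of_index_prime hV ha x.1.toMul.2 ?_⟩)
    fun x y hxy => Subtype.ext <| Additive.toMul.injective <| Subtype.ext congr(($hxy).1)
  have hfix : a * x.1.toMul * a⁻¹ = x.1.toMul := by
    rw [← coe_conjEnd_apply, (sub_eq_zero.mp x.2 : V.conjEnd a x.1 = x.1)]
  exact (eq_mul_inv_iff_mul_eq.mp hfix.symm).symm

theorem card_le_card_center_pow_of_index_eq_prime [Finite G] {p : ℕ} (hp : p.Prime)
    (hidx : V.index = p) (hexp : ∀ x ∈ V, x ^ p = 1) :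
    Nat.card V ≤ Nat.card (center G) ^ p := by
  obtain ⟨a, ha⟩ : ∃ a, a ∉ V := by
    by_contra! h
    exact hp.one_lt.ne' (hidx ▸ index_eq_one.mpr (eq_top_iff' V |>.mpr h))
  set σ := V.conjEnd a
  have hσ : σ ^ p = 1 := by
    rw [← map_pow, V.conjEnd_eq_one_of_mem (hidx ▸ V.pow_index_mem a)]
  have hnil : (σ - 1) ^ p = 0 :=
    AddMonoid.End.sub_one_pow_eq_zero hp (fun x => Additive.toMul.injective <|
      Subtype.ext (hexp _ x.toMul.2)) hσ
  calc Nat.card V = Nat.card (Additive V) := rfl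
    _ ≤ Nat.card (σ - 1).ker ^ p := AddMonoid.End.card_le_card_ker_pow_of_pow_eq_zero hnil
    _ ≤ Nat.card (center G) ^ p := by
        gcongr; exact V.card_ker_conjEnd_sub_one_le (hidx ▸ hp) ha

end Subgroup

theorem stmt_9_general (p : ℕ) (hp : p = 2 ∨ p = 3) (G : Type*) [Group G] [Finite G]
    (hcard : Nat.card G = p ^ 5)
    (V : Subgroup G) (hV1 : ∀ x ∈ V, x ^ p = 1)
    (hV2 : ∀ x ∈ V, ∀ y ∈ V, x * y = y * x)
    (hVcard : Nat.card V = p ^ 4)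
    (hZcard : Nat.card (Subgroup.center G) = p) :
    False := by
  have hpp : p.Prime := by rcases hp with rfl | rfl <;> norm_num
  have : IsMulCommutative V := .of_setLike_mul_comm hV2
  have hidx : V.index = p := by
    have h := V.card_mul_index
    rw [hcard, hVcard, pow_succ] at h
    exact Nat.eq_of_mul_eq_mul_left (pow_pos hpp.pos 4) h
  have : V.Normal :=
    V.normal_of_index_eq_minFac_card (by rw [hidx, hcard, hpp.pow_minFac (by norm_num)])
  have hbound := V.card_le_card_center_pow_of_index_eq_prime hpp hidx hV1
  rw [hVcard, hZcard] at hbound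
  rcases hp with rfl | rfl <;> norm_num at hbound

/-- There is no nonabelian group of order p⁵ (p = 2 or 3) with cyclic center of
order p containing an elementary abelian subgroup of order p⁴. -/
theorem stmt_9 (p : ℕ) (hp : p = 2 ∨ p = 3) (G : Type*) [Group G] [Finite G]
    (hcard : Nat.card G = p ^ 5) (hna : ∃ x y : G, x * y ≠ y * x)
    (V : Subgroup G) (hV1 : ∀ x ∈ V, x ^ p = 1)
    (hV2 : ∀ x ∈ V, ∀ y ∈ V, x * y = y * x)
    (hVcard : Nat.card V = p ^ 4)
    (hZ : IsCyclic (Subgroup.center G))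
    (hZcard : Nat.card (Subgroup.center G) = p) :
    False :=
  stmt_9_general p hp G hcard V hV1 hV2 hVcard hZcard
end

section
/- A filter-regular sequence of homogeneous elements in a connected finitely generated graded-commutative k-algebra whose quotient is finite-dimensional is a system of parameters. -/
/-- The sequence `ζ` in the (graded-)commutative `k`-algebra `R` is
filter-regular: multiplication by `ζ (i+1)` on `R/(ζ 1, …, ζ i)` has
finite-dimensional kernel for each `0 ≤ i ≤ r`, where `ζ (r+1) = 0` (the last
condition says that `R/(ζ 1, …, ζ r)` is finite-dimensional over `k`). -/
def IsFilterRegular (k : Type*) {R : Type*} [Field k] [CommRing R] [Algebra k R]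
    {r : ℕ} (ζ : Fin r → R) : Prop :=
  (∀ i : Fin r, FiniteDimensional k (LinearMap.ker (LinearMap.mulLeft k
      (Ideal.Quotient.mk (Ideal.span (ζ '' {j | (j : ℕ) < (i : ℕ)})) (ζ i))))) ∧
  FiniteDimensional k (R ⧸ Ideal.span (Set.range ζ))

/-- A filter-regular sequence of homogeneous positive-degree elements in a
connected finitely generated graded `k`-algebra, of length equal to the Krull
dimension and with finite-dimensional quotient, is a homogeneous system of
parameters: `R` is a finitely generated module over `k[ζ 1, …, ζ r]`. -/
theorem stmt_16 (k R : Type*) [Field k] [CommRing R] [Algebra k R]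
    (𝒜 : ℕ → Submodule k R) [GradedAlgebra 𝒜]
    (hconn : ∀ x ∈ 𝒜 0, ∃ c : k, x = algebraMap k R c)
    (hfg : Algebra.FiniteType k R)
    (r : ℕ) (hr : ringKrullDim R = r)
    (ζ : Fin r → R) (n : Fin r → ℕ)
    (hdeg : ∀ i, ζ i ∈ 𝒜 (n i)) (hpos : ∀ i, 0 < n i)
    (hζ : IsFilterRegular k ζ)
    (hquot : FiniteDimensional k (R ⧸ Ideal.span (Set.range ζ))) :
    Module.Finite (Algebra.adjoin k (Set.range ζ)) R := by
  classical
  set I : Ideal R := Ideal.span (Set.range ζ) with hI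
  set S : Subalgebra k R := Algebra.adjoin k (Set.range ζ) with hS
  set U : Set R := ⋃ d, (𝒜 d : Set R) with hU
  set f : R →ₗ[k] R ⧸ I := (Ideal.Quotient.mkₐ k I).toLinearMap with hf
  have hfsurj : Function.Surjective f := Ideal.Quotient.mk_surjective
  -- homogeneous elements span R over k
  have hUspan : Submodule.span k U = ⊤ := by
    rw [hU, Submodule.span_iUnion]
    simp only [Submodule.span_eq]
    exact (DirectSum.Decomposition.isInternal 𝒜).submodule_iSup_eq_top
  -- their images span the quotient
  have himg : Submodule.span k (f '' U) = ⊤ := by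
    rw [Submodule.span_image, hUspan, Submodule.map_top,
      LinearMap.range_eq_top.mpr hfsurj]
  -- a finite subset of the images suffices
  obtain ⟨G, hG⟩ : (⊤ : Submodule k (R ⧸ I)).FG := Module.finite_def.mp hquot
  have hg : ∀ g : R ⧸ I, ∃ t : Finset (R ⧸ I),
      ↑t ⊆ f '' U ∧ g ∈ Submodule.span k (t : Set (R ⧸ I)) := by
    intro g
    have : g ∈ Submodule.span k (f '' U) := by rw [himg]; trivial
    obtain ⟨t, ht1, ht2⟩ := Submodule.mem_span_finite_of_mem_span this
    exact ⟨t, ht1, ht2⟩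
  choose t ht1 ht2 using hg
  set s : Finset (R ⧸ I) := G.biUnion t with hs
  have hs_sub : (s : Set (R ⧸ I)) ⊆ f '' U := by
    intro z hz
    rw [hs, Finset.coe_biUnion] at hz
    obtain ⟨g, _, hzg⟩ := Set.mem_iUnion₂.mp hz
    exact ht1 g hzg
  have hs_span : Submodule.span k (s : Set (R ⧸ I)) = ⊤ := by
    rw [← top_le_iff, ← hG]
    apply Submodule.span_le.mpr
    intro g hgG
    exact Submodule.span_mono (by exact_mod_cast Finset.subset_biUnion_of_mem t hgG)
      (ht2 g)
  -- choose homogeneous lifts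
  have hlift : ∀ z : {x // x ∈ s}, ∃ w, w ∈ U ∧ f w = (z : R ⧸ I) :=
    fun z => hs_sub z.property
  choose y hyU hymk using hlift
  -- the S-submodule generated by the lifts
  set M : Submodule S R := Submodule.span S (Set.range y) with hM
  have hyM : ∀ z, y z ∈ M := fun z => Submodule.subset_span ⟨z, rfl⟩
  have hksmul : ∀ (c : k) (m : R), m ∈ M → c • m ∈ M := by
    intro c m hm
    have : c • m = (algebraMap k S c) • m := (algebraMap_smul S c m).symm
    rw [this]
    exact Submodule.smul_mem M _ hm
  have hζS : ∀ i, ζ i ∈ S := fun i => Algebra.subset_adjoin ⟨i, rfl⟩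
  have hζmul : ∀ i, ∀ m ∈ M, m * ζ i ∈ M := by
    intro i m hm
    have : m * ζ i = (⟨ζ i, hζS i⟩ : S) • m := by
      rw [Algebra.smul_def]; exact mul_comm m (ζ i)
    rw [this]
    exact Submodule.smul_mem M _ hm
  -- main induction: every homogeneous element lies in M
  have key : ∀ d, ∀ x ∈ 𝒜 d, x ∈ M := by
    intro d
    induction d using Nat.strong_induction_on with
    | _ d IH =>
      intro x hx
      -- express the image of x as a combination of the chosen spanning set
      have hrange : (Set.range fun z : {x // x ∈ s} => (z : R ⧸ I)) = ↑s :=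
        Subtype.range_coe
      have hmem : f x ∈ Submodule.span k (Set.range fun z : {x // x ∈ s} => (z : R ⧸ I)) := by
        rw [hrange, hs_span]; trivial
      obtain ⟨c, hc⟩ := Submodule.mem_span_range_iff_exists_fun k |>.mp hmem
      set w : R := ∑ z, c z • y z with hw
      have hfw : f w = f x := by
        rw [hw, map_sum]
        rw [← hc]
        apply Finset.sum_congr rfl
        intro z _
        rw [map_smul, hymk]
      have hxwI : x - w ∈ I := by
        have h0 : f (x - w) = 0 := by rw [map_sub, hfw, sub_self]
        exact Ideal.Quotient.eq_zero_iff_mem.mp h0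
      obtain ⟨a, ha⟩ := Ideal.mem_span_range_iff_exists_fun.mp (hI ▸ hxwI)
      have hx_eq : x = (∑ z, c z • y z) + ∑ i, a i * ζ i := by
        rw [← hw, ha]; ring
      -- apply the degree-d projection
      set π : R →ₗ[k] R := GradedAlgebra.proj 𝒜 d with hπ
      have hπx : π x = x := by
        rw [hπ, GradedAlgebra.proj_apply, DirectSum.decompose_of_mem_same 𝒜 hx]
      have hx_eq2 : x = (∑ z, c z • π (y z)) + ∑ i, π (a i * ζ i) := by
        conv_lhs => rw [← hπx, hx_eq]
        rw [map_add, map_sum, map_sum]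
        congr 1
        exact Finset.sum_congr rfl fun z _ => by rw [map_smul]
      rw [hx_eq2]
      apply Submodule.add_mem
      · apply Submodule.sum_mem
        intro z _
        apply hksmul
        obtain ⟨_, ⟨e, rfl⟩, hye⟩ := hyU z
        by_cases he : e = d
        · rw [hπ, GradedAlgebra.proj_apply,
            DirectSum.decompose_of_mem_same 𝒜 (he ▸ hye)]
          exact hyM z
        · rw [hπ, GradedAlgebra.proj_apply,
            DirectSum.decompose_of_mem_ne 𝒜 hye he]
          exact Submodule.zero_mem M
      · apply Submodule.sum_mem
        intro i _
        by_cases hle : n i ≤ d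
        · have h1 := DirectSum.coe_decompose_mul_of_right_mem_of_le (𝒜 := 𝒜)
            (a := a i) (n := d) (hdeg i) hle
          rw [hπ, GradedAlgebra.proj_apply, h1]
          apply hζmul
          have hlt : d - n i < d := Nat.sub_lt (lt_of_lt_of_le (hpos i) hle) (hpos i)
          exact IH _ hlt _ (SetLike.coe_mem _)
        · have h1 := DirectSum.coe_decompose_mul_of_right_mem_of_not_le (𝒜 := 𝒜)
            (a := a i) (n := d) (hdeg i) hle
          rw [hπ, GradedAlgebra.proj_apply, h1]
          exact Submodule.zero_mem M
  -- conclude: M = ⊤, so R is finite over S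
  have hMtop : ∀ x : R, x ∈ M := by
    intro x
    rw [← DirectSum.sum_support_decompose 𝒜 x]
    exact Submodule.sum_mem M fun i _ => key i _ (SetLike.coe_mem _)
  rw [Module.finite_def, Submodule.fg_def]
  exact ⟨Set.range y, Set.finite_range y, by
    rw [← hM]; exact top_unique fun x _ => hMtop x⟩
end
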